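/- arXiv:2208.14758 — 9 statements merged into one kernel-verified Lean document; each statement's English description precedes it below -/
import Mathlib

section
/- Let Γ be a countable group and let μ be an invariant random subgroup of Γ, i.e. a Borel probability measure on Sub(Γ) invariant under the conjugation action of Γ. Then μ-almost every subgroup of Γ is a boomerang subgroup, i.e. μ(Boom(Γ)) = 1. -/
/-- The conjugation action of `γ` on subgroups: `Δ ↦ γ Δ γ⁻¹`. -/
def conjSubgroup {Γ : Type*} [Group Γ] (γ : Γ) (Δ : Subgroup Γ) : Subgroup Γ :=
  Subgroup.map (MulAut.conj γ).toMonoidHom Δ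

/-- The Chabauty topology on `Subgroup Γ`: induced from the product of discrete
topologies on `Γ → Prop` via the membership indicator. -/
def chabautyTopology (Γ : Type*) [Group Γ] : TopologicalSpace (Subgroup Γ) :=
  TopologicalSpace.induced (fun (Δ : Subgroup Γ) (g : Γ) => g ∈ Δ)
    (@Pi.topologicalSpace Γ (fun _ => Prop) (fun _ => ⊥))

/-- `γ` is a recurrent direction for `Δ`: every Chabauty-open neighbourhood `O` of `Δ`
contains `γ^n Δ γ^{-n}` for some `n ≥ 1`. -/
def IsRecurrentDirection {Γ : Type*} [Group Γ] (γ : Γ) (Δ : Subgroup Γ) : Prop :=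
  ∀ O : Set (Subgroup Γ), (chabautyTopology Γ).IsOpen O → Δ ∈ O →
    ∃ n : ℕ, 1 ≤ n ∧ conjSubgroup (γ ^ n) Δ ∈ O

/-- `Δ` is a boomerang subgroup if every `γ` is a recurrent direction for it. -/
def IsBoomerang {Γ : Type*} [Group Γ] (Δ : Subgroup Γ) : Prop :=
  ∀ γ : Γ, IsRecurrentDirection γ Δ

/-- The Borel σ-algebra of the Chabauty topology. -/
def chabautyBorel (Γ : Type*) [Group Γ] : MeasurableSpace (Subgroup Γ) :=
  @borel (Subgroup Γ) (chabautyTopology Γ)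

/-!
Conjugation by `γ` is a Chabauty-continuous map preserving `μ`, and the Chabauty topology of a
countable group is second countable. Poincaré recurrence then says that `μ`-almost every `Δ`
returns to each of its neighbourhoods under some positive power of `γ`; as `Γ` is countable,
these conull sets can be intersected over all `γ`.
-/

open MeasureTheory Filter

theorem MeasureTheory.MeasurePreserving.ae_forall_isOpen_exists_iterate_mem {α : Type*}
    [TopologicalSpace α] [SecondCountableTopology α] [MeasurableSpace α] [OpensMeasurableSpace α]
    {μ : Measure α} [IsFiniteMeasure μ] {f : α → α} (hf : MeasurePreserving f μ μ) :
    ∀ᵐ x ∂μ, ∀ O, IsOpen O → x ∈ O → ∃ n, 1 ≤ n ∧ f^[n] x ∈ O := by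
  filter_upwards [hf.conservative.ae_frequently_mem_of_mem_nhds] with x hx O hO hxO
  exact frequently_atTop.1 (hx O (hO.mem_nhds hxO)) 1

section ConjSubgroup

variable {Γ : Type*} [Group Γ]

lemma mem_conjSubgroup (γ g : Γ) (Δ : Subgroup Γ) :
    g ∈ conjSubgroup γ Δ ↔ γ⁻¹ * g * γ ∈ Δ := by
  rw [conjSubgroup, Subgroup.mem_map_equiv]
  simp [mul_assoc]

lemma conjSubgroup_mul (γ δ : Γ) (Δ : Subgroup Γ) :
    conjSubgroup (γ * δ) Δ = conjSubgroup γ (conjSubgroup δ Δ) := by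
  ext g
  simp only [mem_conjSubgroup, mul_inv_rev, mul_assoc]

lemma iterate_conjSubgroup (γ : Γ) (n : ℕ) (Δ : Subgroup Γ) :
    (conjSubgroup γ)^[n] Δ = conjSubgroup (γ ^ n) Δ := by
  induction n with
  | zero => ext g; simp [mem_conjSubgroup]
  | succ n ih => rw [Function.iterate_succ_apply', ih, pow_succ', conjSubgroup_mul]

end ConjSubgroup

attribute [local instance] chabautyTopology chabautyBorel

section Chabauty

variable {Γ : Type*} [Group Γ]

instance chabautyBorel_borelSpace : BorelSpace (Subgroup Γ) := ⟨rfl⟩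

-- `Prop` carries the Sierpiński topology as an instance; the Chabauty topology uses the discrete one.
instance chabautyTopology_secondCountableTopology [Countable Γ] :
    SecondCountableTopology (Subgroup Γ) :=
  letI : TopologicalSpace Prop := ⊥
  TopologicalSpace.secondCountableTopology_induced _ _ _

lemma continuous_conjSubgroup (γ : Γ) : Continuous (conjSubgroup γ) := by
  let _ : TopologicalSpace Prop := ⊥
  refine continuous_induced_rng.2 (continuous_pi fun g => ?_)
  simp only [Function.comp_def, mem_conjSubgroup]
  exact (continuous_apply _).comp continuous_induced_dom

end Chabauty

theorem irs_almost_surely_boomerang {Γ : Type*} [Group Γ] [Countable Γ]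
    (μ : @MeasureTheory.Measure (Subgroup Γ) (chabautyBorel Γ))
    (hprob : @MeasureTheory.IsProbabilityMeasure (Subgroup Γ) (chabautyBorel Γ) μ)
    (hinv : ∀ γ : Γ, ∀ s : Set (Subgroup Γ),
      @MeasurableSet (Subgroup Γ) (chabautyBorel Γ) s →
        μ ((conjSubgroup γ) ⁻¹' s) = μ s) :
    μ {Δ : Subgroup Γ | IsBoomerang Δ} = 1 := by
  have hmp (γ : Γ) : MeasurePreserving (conjSubgroup γ) μ μ :=
    ⟨(continuous_conjSubgroup γ).measurable, Measure.ext fun s hs => by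
      rw [Measure.map_apply (continuous_conjSubgroup γ).measurable hs, hinv γ s hs]⟩
  have hae : ∀ᵐ Δ ∂μ, IsBoomerang Δ := by
    refine ae_all_iff.2 fun γ => ?_
    filter_upwards [(hmp γ).ae_forall_isOpen_exists_iterate_mem] with Δ hΔ O hO hΔO
    simpa only [iterate_conjSubgroup] using hΔ O hO hΔO
  rw [measure_congr (eventuallyEq_univ.2 hae), measure_univ]
end

section
/- Let Γ be a countable group, Δ ≤ Γ a boomerang subgroup, δ ∈ Δ and γ ∈ Γ. Then there are infinitely many integers k > 0 such that both γ^k δ γ^{-k} ∈ Δ and the commutator [δ, γ^k] = δ γ^k δ^{-1} γ^{-k} belongs to Δ. -/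
theorem boomerang_commutator_in {Γ : Type*} [Group Γ] [Countable Γ]
    (Δ : Subgroup Γ) (hΔ : IsBoomerang Δ) (δ : Γ) (hδ : δ ∈ Δ) (γ : Γ) :
    ∀ N : ℕ, ∃ k : ℕ, N < k ∧
      γ ^ k * δ * (γ ^ k)⁻¹ ∈ Δ ∧ δ * γ ^ k * δ⁻¹ * (γ ^ k)⁻¹ ∈ Δ := by
  intro N
  have hU : @IsOpen (Γ → Prop) (@Pi.topologicalSpace Γ (fun _ => Prop) (fun _ => ⊥))
      {f | f δ} := by
    letI : TopologicalSpace Prop := ⊥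
    haveI : DiscreteTopology Prop := ⟨rfl⟩
    have hc : Continuous (fun f : Γ → Prop => f δ) := continuous_apply δ
    exact hc.isOpen_preimage {p | p} (isOpen_discrete _)
  have hO : (chabautyTopology Γ).IsOpen {Λ : Subgroup Γ | δ ∈ Λ} :=
    ⟨{f | f δ}, hU, rfl⟩
  obtain ⟨n, hn, hmem⟩ := hΔ (γ⁻¹ ^ (N + 1)) {Λ : Subgroup Γ | δ ∈ Λ} hO hδ
  obtain ⟨y, hy, hxy⟩ := hmem
  refine ⟨(N + 1) * n, ?_, ?_⟩
  · calc N < N + 1 := Nat.lt_succ_self N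
      _ = (N + 1) * 1 := (mul_one _).symm
      _ ≤ (N + 1) * n := Nat.mul_le_mul_left _ hn
  have hx : (γ⁻¹ ^ (N + 1)) ^ n = (γ ^ ((N + 1) * n))⁻¹ := by
    rw [← pow_mul, inv_pow]
  have hy' : γ ^ ((N + 1) * n) * δ * (γ ^ ((N + 1) * n))⁻¹ = y := by
    have := hxy
    simp only [MulEquiv.coe_toMonoidHom, MulAut.conj_apply, hx] at this
    rw [← this]
    group
  have h1 : γ ^ ((N + 1) * n) * δ * (γ ^ ((N + 1) * n))⁻¹ ∈ Δ := hy' ▸ hy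
  refine ⟨h1, ?_⟩
  have h2 : δ * (γ ^ ((N + 1) * n) * δ * (γ ^ ((N + 1) * n))⁻¹)⁻¹ ∈ Δ :=
    Δ.mul_mem hδ (Δ.inv_mem h1)
  have : δ * γ ^ ((N + 1) * n) * δ⁻¹ * (γ ^ ((N + 1) * n))⁻¹ =
      δ * (γ ^ ((N + 1) * n) * δ * (γ ^ ((N + 1) * n))⁻¹)⁻¹ := by group
  rw [this]
  exact h2
end

section
/- Let Γ₂ be a countable group, Γ₁ ≤ Γ₂ a subgroup, and Δ ≤ Γ₂ a boomerang subgroup of Γ₂. Then Δ ∩ Γ₁ is a boomerang subgroup of Γ₁. -/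
theorem boomerang_inter_subgroup {Γ₂ : Type*} [Group Γ₂] [Countable Γ₂]
    (Γ₁ : Subgroup Γ₂) (Δ : Subgroup Γ₂) (hΔ : IsBoomerang Δ) :
    IsBoomerang (Δ.comap Γ₁.subtype) := by
  intro γ O hO hmem
  obtain ⟨U, hU, rfl⟩ := hO
  -- restriction map on indicator functions
  set f : (Γ₂ → Prop) → (↥Γ₁ → Prop) := fun p g => p ↑g with hf
  have hfopen : (@Pi.topologicalSpace Γ₂ (fun _ => Prop) (fun _ => ⊥)).IsOpen (f ⁻¹' U) := by
    letI : TopologicalSpace Prop := ⊥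
    have hcont : Continuous f := continuous_pi fun g => continuous_apply (↑g : Γ₂)
    exact hcont.isOpen_preimage U hU
  have h2 : (chabautyTopology Γ₂).IsOpen
      ((fun Λ : Subgroup Γ₂ => fun g : Γ₂ => g ∈ Λ) ⁻¹' (f ⁻¹' U)) :=
    ⟨f ⁻¹' U, hfopen, rfl⟩
  have hΔmem : Δ ∈ (fun Λ : Subgroup Γ₂ => fun g : Γ₂ => g ∈ Λ) ⁻¹' (f ⁻¹' U) := hmem
  obtain ⟨n, hn, hmem'⟩ := hΔ (↑γ) _ h2 hΔmem
  refine ⟨n, hn, ?_⟩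
  have key : (fun g : ↥Γ₁ => g ∈ conjSubgroup (γ ^ n) (Δ.comap Γ₁.subtype))
      = fun g : ↥Γ₁ => (↑g : Γ₂) ∈ conjSubgroup ((↑γ : Γ₂) ^ n) Δ := by
    funext g
    apply propext
    simp only [conjSubgroup, Subgroup.mem_map_equiv, MulAut.conj_symm_apply,
      Subgroup.mem_comap, Subgroup.coe_subtype]
    push_cast
    rfl
  show (fun g : ↥Γ₁ => g ∈ conjSubgroup (γ ^ n) (Δ.comap Γ₁.subtype)) ∈ U
  rw [key]
  exact hmem'
end

section
/- Let Γ₁ ≤ Γ₂ be countable groups and let Δ ≤ Γ₁ be a boomerang subgroup of Γ₁. Assume that for every γ ∈ Γ₂ there exists an integer k > 0 with γ^k ∈ Γ₁. Then Δ, viewed as a subgroup of Γ₂, is a boomerang subgroup of Γ₂. In particular, this holds if Γ₁ has finite index in Γ₂. -/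
lemma chabauty_map_continuous {Γ₂ : Type*} [Group Γ₂] (Γ₁ : Subgroup Γ₂) :
    @Continuous _ _ (chabautyTopology Γ₁) (chabautyTopology Γ₂)
      (fun Δ' : Subgroup Γ₁ => Δ'.map Γ₁.subtype) := by
  letI : TopologicalSpace Prop := ⊥
  letI : TopologicalSpace (Subgroup Γ₁) := chabautyTopology Γ₁
  apply continuous_induced_rng.mpr
  apply continuous_pi
  intro x
  by_cases hx : x ∈ Γ₁
  · show Continuous fun Δ' : Subgroup Γ₁ => x ∈ Δ'.map Γ₁.subtype
    have heq : (fun Δ' : Subgroup Γ₁ => x ∈ Δ'.map Γ₁.subtype)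
        = fun Δ' : Subgroup Γ₁ => (⟨x, hx⟩ : Γ₁) ∈ Δ' := by
      funext Δ'
      apply propext
      constructor
      · rintro ⟨y, hy, rfl⟩
        exact hy
      · intro h
        exact ⟨⟨x, hx⟩, h, rfl⟩
    rw [heq]
    exact (continuous_apply ((⟨x, hx⟩ : Γ₁))).comp continuous_induced_dom
  · show Continuous fun Δ' : Subgroup Γ₁ => x ∈ Δ'.map Γ₁.subtype
    have heq : (fun Δ' : Subgroup Γ₁ => x ∈ Δ'.map Γ₁.subtype) = fun _ => False := by
      funext Δ'
      apply propext
      simp only [iff_false]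
      rintro ⟨y, _, rfl⟩
      exact hx y.2
    rw [heq]
    exact continuous_const

theorem boomerang_of_powers_in {Γ₂ : Type*} [Group Γ₂] [Countable Γ₂]
    (Γ₁ : Subgroup Γ₂) (Δ : Subgroup Γ₁) (hΔ : IsBoomerang Δ)
    (hpow : ∀ γ : Γ₂, ∃ k : ℕ, 0 < k ∧ γ ^ k ∈ Γ₁) :
    IsBoomerang (Δ.map Γ₁.subtype) := by
  intro γ O hO hmem
  obtain ⟨k, hk, hγk⟩ := hpow γ
  set g : Γ₁ := ⟨γ ^ k, hγk⟩ with hg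
  have hO' := (continuous_def.mp (chabauty_map_continuous Γ₁)) O hO
  obtain ⟨n, hn, hrec⟩ := hΔ g _ hO' hmem
  refine ⟨k * n, Nat.one_le_iff_ne_zero.mpr (by positivity), ?_⟩
  have hcoe : ((g ^ n : Γ₁) : Γ₂) = γ ^ (k * n) := by
    rw [pow_mul]
    push_cast
    rfl
  have key : conjSubgroup (γ ^ (k * n)) (Δ.map Γ₁.subtype)
      = (conjSubgroup (g ^ n) Δ).map Γ₁.subtype := by
    unfold conjSubgroup
    rw [Subgroup.map_map, Subgroup.map_map]
    congr 1
    ext d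
    simp only [MonoidHom.comp_apply, MulEquiv.coe_toMonoidHom, MulAut.conj_apply,
      Subgroup.coe_subtype]
    push_cast [hcoe]
    ring_nf
  rw [key]
  exact hrec
end

section
/- Let G be a group, Γ ≤ G a countable subgroup, and let g ∈ G commensurate Γ, i.e. Γ ∩ gΓg^{-1} has finite index in both Γ and gΓg^{-1}. If Δ ≤ Γ is a boomerang subgroup of Γ, then gΔg^{-1} ∩ Γ is a boomerang subgroup of Γ. -/
/-! Since `gΓg⁻¹ ∩ Γ` has finite index in `Γ`, every `γ ∈ Γ` has a power `γ^m` (`m ≥ 1`) in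
`gΓg⁻¹`, so `δ = g⁻¹γ^m g ∈ Γ`. The map `Λ ↦ gΛg⁻¹ ∩ Γ` on `Sub(Γ)` is Chabauty-continuous (each
membership coordinate of the image is a coordinate of `Λ` or constant) and intertwines conjugation
by `δ` with conjugation by `γ^m`. Hence it carries the recurrence of `δ` for `Δ` to recurrence of
`γ^m`, and therefore of `γ`, for `gΔg⁻¹ ∩ Γ`. -/

open Topology

section Conjugation

variable {H : Type*} [Group H]

lemma mem_conjSubgroup_s5 (h x : H) (S : Subgroup H) :
    x ∈ conjSubgroup h S ↔ h⁻¹ * x * h ∈ S := by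
  rw [conjSubgroup, Subgroup.mem_map_equiv]
  simp [mul_assoc]

lemma conjSubgroup_one : conjSubgroup (1 : H) = id := by
  ext S x
  simp [mem_conjSubgroup_s5]

lemma conjSubgroup_mul_s5 (a b : H) :
    conjSubgroup (a * b) = conjSubgroup a ∘ conjSubgroup b := by
  ext S x
  simp [mem_conjSubgroup_s5, mul_assoc]

lemma conjSubgroup_pow (h : H) (n : ℕ) : conjSubgroup (h ^ n) = (conjSubgroup h)^[n] := by
  induction n with
  | zero => simp [conjSubgroup_one]
  | succ n ih => rw [pow_succ', conjSubgroup_mul_s5, ih, Function.iterate_succ']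

end Conjugation

section Chabauty

variable {Γ : Type*} [Group Γ]

lemma continuous_chabauty_iff {X : Type*} [TopologicalSpace X] {f : X → Subgroup Γ} :
    Continuous[_, chabautyTopology Γ] f ↔ ∀ x : Γ, Continuous[_, ⊥] fun a => x ∈ f a := by
  rw [chabautyTopology, continuous_induced_rng]
  exact @continuous_pi_iff _ _ _ _ (fun _ => ⊥) _

lemma continuous_chabauty_mem (x : Γ) :
    Continuous[chabautyTopology Γ, ⊥] fun Λ : Subgroup Γ => x ∈ Λ :=
  (@continuous_chabauty_iff Γ _ _ (chabautyTopology Γ) id).1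
    (@continuous_id _ (chabautyTopology Γ)) x

lemma IsRecurrentDirection.of_pow {γ : Γ} {Δ : Subgroup Γ} {m : ℕ} (hm : 0 < m)
    (h : IsRecurrentDirection (γ ^ m) Δ) : IsRecurrentDirection γ Δ := by
  intro O hO hΔ
  obtain ⟨n, hn, hmem⟩ := h O hO hΔ
  exact ⟨m * n, Nat.one_le_iff_ne_zero.2 (by positivity), by rwa [pow_mul]⟩

lemma IsRecurrentDirection.map {Γ' : Type*} [Group Γ'] {f : Subgroup Γ → Subgroup Γ'}
    (hf : Continuous[chabautyTopology Γ, chabautyTopology Γ'] f) {δ : Γ} {γ : Γ'}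
    (hfc : Function.Semiconj f (conjSubgroup δ) (conjSubgroup γ)) {Δ : Subgroup Γ}
    (h : IsRecurrentDirection δ Δ) : IsRecurrentDirection γ (f Δ) := by
  intro O hO hΔ
  have hOf : (chabautyTopology Γ).IsOpen (f ⁻¹' O) :=
    @Continuous.isOpen_preimage _ _ (chabautyTopology Γ) (chabautyTopology Γ') f hf O hO
  obtain ⟨n, hn, hmem⟩ := h (f ⁻¹' O) hOf hΔ
  refine ⟨n, hn, ?_⟩
  rw [conjSubgroup_pow] at hmem ⊢
  rwa [← (hfc.iterate_right n) Δ]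

end Chabauty

section Commensurator

variable {G : Type*} [Group G] (Γ : Subgroup G) (g : G)

def conjInter (Λ : Subgroup Γ) : Subgroup Γ :=
  (conjSubgroup g (Λ.map Γ.subtype)).comap Γ.subtype

variable {Γ g}

lemma mem_conjInter {Λ : Subgroup Γ} {x : Γ} :
    x ∈ conjInter Γ g Λ ↔ ∃ h : g⁻¹ * x * g ∈ Γ, ⟨_, h⟩ ∈ Λ := by
  simp only [conjInter, Subgroup.mem_comap, mem_conjSubgroup_s5, Subgroup.mem_map,
    Subgroup.coe_subtype]
  constructor
  · rintro ⟨z, hz, hzx⟩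
    have hz' : z = ⟨_, hzx ▸ z.2⟩ := Subtype.ext hzx
    exact ⟨_, hz' ▸ hz⟩
  · rintro ⟨h, hx⟩
    exact ⟨_, hx, rfl⟩

lemma conjInter_semiconj {γ δ : Γ} (hδ : (δ : G) = g⁻¹ * γ * g) :
    Function.Semiconj (conjInter Γ g) (conjSubgroup δ) (conjSubgroup γ) := by
  intro Λ
  ext x
  have key : g⁻¹ * ((γ : G)⁻¹ * x * γ) * g = (δ : G)⁻¹ * (g⁻¹ * x * g) * δ := by
    rw [hδ]; group
  simp only [mem_conjInter, mem_conjSubgroup_s5, Subgroup.coe_mul, Subgroup.coe_inv, key]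
  constructor
  · rintro ⟨h, hΛ⟩
    exact ⟨Γ.mul_mem (Γ.mul_mem (Γ.inv_mem δ.2) h) δ.2, hΛ⟩
  · rintro ⟨h, hΛ⟩
    have hx : g⁻¹ * x * g ∈ Γ := by
      simpa [mul_assoc] using Γ.mul_mem (Γ.mul_mem δ.2 h) (Γ.inv_mem δ.2)
    exact ⟨hx, hΛ⟩

variable (Γ g)

lemma continuous_conjInter :
    Continuous[chabautyTopology Γ, chabautyTopology Γ] (conjInter Γ g) := by
  refine (@continuous_chabauty_iff _ _ _ (chabautyTopology Γ) _).2 fun x => ?_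
  simp only [mem_conjInter]
  by_cases h : g⁻¹ * x * g ∈ Γ
  · simpa only [h, exists_true_left] using continuous_chabauty_mem (⟨_, h⟩ : Γ)
  · simpa only [h, IsEmpty.exists_iff] using @continuous_const _ _ (chabautyTopology Γ) ⊥ False

end Commensurator

theorem boomerang_commensurator_general {G : Type*} [Group G] (Γ : Subgroup G)
    (g : G)
    (hc1 : (conjSubgroup g Γ).relIndex Γ ≠ 0)
    (Δ : Subgroup Γ) (hΔ : IsBoomerang Δ) :
    IsBoomerang ((conjSubgroup g (Δ.map Γ.subtype)).comap Γ.subtype) := by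
  intro γ
  obtain ⟨m, hm, -, hγm, -⟩ := Subgroup.exists_pow_mem_of_relIndex_ne_zero hc1 γ.2
  obtain ⟨δ, hδ⟩ : ∃ δ : Γ, (δ : G) = g⁻¹ * ((γ ^ m : Γ) : G) * g :=
    ⟨⟨_, (mem_conjSubgroup_s5 g _ Γ).1 hγm⟩, rfl⟩
  exact ((hΔ δ).map (continuous_conjInter Γ g) (conjInter_semiconj hδ)).of_pow hm

theorem boomerang_commensurator {G : Type*} [Group G] (Γ : Subgroup G) [Countable Γ]
    (g : G)
    (hc1 : (conjSubgroup g Γ).relIndex Γ ≠ 0)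
    (hc2 : Γ.relIndex (conjSubgroup g Γ) ≠ 0)
    (Δ : Subgroup Γ) (hΔ : IsBoomerang Δ) :
    IsBoomerang ((conjSubgroup g (Δ.map Γ.subtype)).comap Γ.subtype) :=
  boomerang_commensurator_general Γ g hc1 Δ hΔ
end

section
/- Let Γ be a countable group and Δ ≤ Γ a finitely generated subgroup. Then Δ is a boomerang subgroup of Γ if and only if for every γ ∈ Γ there exists an integer n ≥ 1 with γ^n ∈ N_Γ(Δ), the normalizer of Δ in Γ. -/
/-!
If `Δ = ⟨S⟩` with `S` finite, the subgroups containing `S` form a Chabauty-open neighbourhood of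
`Δ`, so recurrence of `γ` and of `γ⁻¹` gives `Δ ≤ γⁿ Δ γ⁻ⁿ` and `Δ ≤ γ⁻ᵐ Δ γᵐ` for some
`n, m ≥ 1`. Iterating, `γ^(nm)` conjugates `Δ` into itself in both directions, hence normalizes
it. Conversely, if `γⁿ` normalizes `Δ` then `γⁿ Δ γ⁻ⁿ = Δ` lies in every neighbourhood of `Δ`.
-/

open Pointwise

section RecurrenceInOrderedSets

variable {G α : Type*} [Group G] [MulAction G α] {a : G} {x : α}

theorem le_pow_smul_of_le_smul [Preorder α] [CovariantClass G α (· • ·) (· ≤ ·)]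
    (h : x ≤ a • x) (k : ℕ) : x ≤ a ^ k • x := by
  induction k with
  | zero => rw [pow_zero, one_smul]
  | succ k ih =>
    calc x ≤ a ^ k • x := ih
      _ ≤ a ^ k • a • x := smul_le_smul_left _ h
      _ = a ^ (k + 1) • x := by rw [pow_succ, mul_smul]

theorem pow_mul_smul_eq_of_le_pow_smul [PartialOrder α] [CovariantClass G α (· • ·) (· ≤ ·)]
    {n m : ℕ} (hn : x ≤ a ^ n • x) (hm : x ≤ a⁻¹ ^ m • x) : a ^ (n * m) • x = x := by
  have hup : x ≤ a ^ (n * m) • x := by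
    simpa only [pow_mul] using le_pow_smul_of_le_smul hn m
  have hdown : x ≤ (a ^ (n * m))⁻¹ • x := by
    simpa only [inv_pow, ← pow_mul, mul_comm m n] using le_pow_smul_of_le_smul hm n
  refine le_antisymm ?_ hup
  simpa only [smul_inv_smul] using smul_le_smul_left (a ^ (n * m)) hdown

end RecurrenceInOrderedSets

theorem conjSubgroup_eq_smul {Γ : Type*} [Group Γ] (g : Γ) (Δ : Subgroup Γ) :
    conjSubgroup g Δ = ConjAct.toConjAct g • Δ :=
  rfl

theorem isOpen_setOf_mem_chabauty {Γ : Type*} [Group Γ] (g : Γ) :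
    (chabautyTopology Γ).IsOpen {H : Subgroup Γ | g ∈ H} := by
  let _ : TopologicalSpace Prop := ⊥
  have : DiscreteTopology Prop := ⟨rfl⟩
  exact isOpen_induced
    ((continuous_apply (A := fun _ : Γ => Prop) g).isOpen_preimage {p | p} (isOpen_discrete _))

theorem Subgroup.FG.isOpen_setOf_le_chabauty {Γ : Type*} [Group Γ] {Δ : Subgroup Γ}
    (hΔ : Δ.FG) : (chabautyTopology Γ).IsOpen {H : Subgroup Γ | Δ ≤ H} := by
  obtain ⟨S, rfl⟩ := hΔ
  have hS : {H : Subgroup Γ | Subgroup.closure (S : Set Γ) ≤ H} = ⋂ s ∈ S, {H | s ∈ H} := by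
    ext H
    simp [Subgroup.closure_le, Set.subset_def]
  rw [hS]
  exact @isOpen_biInter_finset _ _ (chabautyTopology Γ) _ _ fun s _ => isOpen_setOf_mem_chabauty s

theorem IsRecurrentDirection.exists_le_conjSubgroup_pow {Γ : Type*} [Group Γ] {γ : Γ}
    {Δ : Subgroup Γ} (h : IsRecurrentDirection γ Δ) (hΔ : Δ.FG) :
    ∃ n : ℕ, 1 ≤ n ∧ Δ ≤ conjSubgroup (γ ^ n) Δ :=
  h _ hΔ.isOpen_setOf_le_chabauty (le_refl Δ)

theorem isRecurrentDirection_of_pow_mem_normalizer {Γ : Type*} [Group Γ] {γ : Γ}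
    {Δ : Subgroup Γ} {n : ℕ} (hn : 1 ≤ n) (hγ : γ ^ n ∈ Subgroup.normalizer (Δ : Set Γ)) :
    IsRecurrentDirection γ Δ := by
  have hfix : conjSubgroup (γ ^ n) Δ = Δ := by
    rw [conjSubgroup_eq_smul, Subgroup.conjAct_pointwise_smul_iff]; exact hγ
  exact fun O _ hΔO => ⟨n, hn, by rwa [hfix]⟩

theorem fg_boomerang_iff_powers_normalize_general {Γ : Type*} [Group Γ]
    (Δ : Subgroup Γ) (hfg : Δ.FG) :
    IsBoomerang Δ ↔ ∀ γ : Γ, ∃ n : ℕ, 1 ≤ n ∧ γ ^ n ∈ Subgroup.normalizer (Δ : Set Γ) := by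
  constructor
  · intro hΔ γ
    obtain ⟨n, hn, hup⟩ := (hΔ γ).exists_le_conjSubgroup_pow hfg
    obtain ⟨m, hm, hdown⟩ := (hΔ γ⁻¹).exists_le_conjSubgroup_pow hfg
    rw [conjSubgroup_eq_smul, map_pow] at hup hdown
    rw [map_inv] at hdown
    have hfix := pow_mul_smul_eq_of_le_pow_smul hup hdown
    rw [← map_pow, Subgroup.conjAct_pointwise_smul_iff] at hfix
    exact ⟨n * m, Nat.one_le_iff_ne_zero.2 (by positivity), hfix⟩
  · intro h γ
    obtain ⟨n, hn, hγ⟩ := h γ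
    exact isRecurrentDirection_of_pow_mem_normalizer hn hγ

theorem fg_boomerang_iff_powers_normalize {Γ : Type*} [Group Γ] [Countable Γ]
    (Δ : Subgroup Γ) (hfg : Δ.FG) :
    IsBoomerang Δ ↔ ∀ γ : Γ, ∃ n : ℕ, 1 ≤ n ∧ γ ^ n ∈ Subgroup.normalizer (Δ : Set Γ) :=
  fg_boomerang_iff_powers_normalize_general Δ hfg
end

section
/- Let n ≥ 2. Let v, u, a be n×n rational upper unitriangular matrices (upper triangular with all diagonal entries equal to 1), let d be an invertible diagonal rational matrix with diagonal entries d₁,…,d_n, let σ be a permutation of {1,…,n} with permutation matrix P_σ (sending the j-th standard basis vector to the σ(j)-th), and set δ = v·d·P_σ·u. Then for every k ∈ ℤ, [[δ, e_{1,n}^k], v a v^{-1}] = v · [e_{σ(1),σ(n)}^{(d_{σ(1)}/d_{σ(n)})·k}, a] · v^{-1}, where [x,y] = x y x^{-1} y^{-1} and e_{i,j}^{t} denotes the matrix I + t·E_{i,j} with E_{i,j} the matrix unit with 1 in position (i,j). -/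
/-- The elementary matrix `e_{i,j}^t = I + t·E_{i,j}`. -/
def elemMat {n : ℕ} (i j : Fin n) (t : ℚ) : Matrix (Fin n) (Fin n) ℚ :=
  1 + Matrix.single i j t

/-- The commutator `[x,y] = x y x⁻¹ y⁻¹` of square matrices (using the nonsingular
matrix inverse). -/
noncomputable def commMat {n : ℕ} (x y : Matrix (Fin n) (Fin n) ℚ) :
    Matrix (Fin n) (Fin n) ℚ :=
  x * y * x⁻¹ * y⁻¹

/-!
The matrix `e_{1,n}^k` is central in the upper unitriangular group, so it commutes with `u`,
`v` and `a`. Conjugation by the monomial matrix `d P_σ` carries it to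
`e_{σ(1),σ(n)}^{(d_{σ(1)}/d_{σ(n)}) k}`, since `P_σ` permutes the indices of the matrix unit
and `d` rescales its entry. Granted these two facts, the formula is an identity between
commutators in any group, applied in `GL_n(ℚ)`.
-/

open Matrix
open scoped commutatorElement

theorem commutatorElement_commutatorElement_conj_of_commute {G : Type*} [Group G]
    {u v a z : G} (hu : Commute u z) (hv : Commute v z) (ha : Commute a z) (g : G) :
    ⁅⁅v * g * u, z⁆, v * a * v⁻¹⁆ = v * ⁅g * z * g⁻¹, a⁆ * v⁻¹ := by
  have h_inner : ⁅v * g * u, z⁆ = v * (g * z * g⁻¹ * z⁻¹) * v⁻¹ := by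
    calc ⁅v * g * u, z⁆
          = v * g * (u * z * u⁻¹) * g⁻¹ * (v⁻¹ * z⁻¹ * v) * v⁻¹ := by group
      _ = _ := by rw [hu.mul_inv_cancel, hv.inv_right.inv_mul_cancel]; group
  have h_drop : ⁅g * z * g⁻¹ * z⁻¹, a⁆ = ⁅g * z * g⁻¹, a⁆ := by
    calc ⁅g * z * g⁻¹ * z⁻¹, a⁆
          = g * z * g⁻¹ * (z⁻¹ * a * z) * (g * z * g⁻¹)⁻¹ * a⁻¹ := by group
      _ = _ := by rw [ha.symm.inv_mul_cancel]; rfl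
  rw [h_inner, ← h_drop]
  exact (map_commutatorElement (MulAut.conj v) _ _).symm

namespace Matrix

variable {ι R : Type*} [Fintype ι] [DecidableEq ι]

section Unitriangular

variable [LinearOrder ι] {w : Matrix ι ι R}

theorem IsUpperTriangular.mul_single_of_isBot [Semiring R] (hw : w.IsUpperTriangular)
    (hwd : ∀ i, w i i = 1) {i : ι} (hi : IsBot i) (j : ι) (t : R) :
    w * single i j t = single i j t := by
  ext p q
  rcases eq_or_ne q j with rfl | hq
  · rw [mul_single_apply_same]
    rcases eq_or_ne p i with rfl | hp
    · simp [hwd]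
    · simp [hw ((hi p).lt_of_ne' hp), single_apply_of_row_ne hp.symm]
  · rw [mul_single_apply_of_ne _ _ _ _ _ hq, single_apply_of_col_ne _ _ hq.symm]

theorem IsUpperTriangular.single_mul_of_isTop [Semiring R] (hw : w.IsUpperTriangular)
    (hwd : ∀ i, w i i = 1) {j : ι} (hj : IsTop j) (i : ι) (t : R) :
    single i j t * w = single i j t := by
  ext p q
  rcases eq_or_ne p i with rfl | hp
  · rw [single_mul_apply_same]
    rcases eq_or_ne q j with rfl | hq
    · simp [hwd]
    · simp [hw ((hj q).lt_of_ne hq), single_apply_of_col_ne _ _ hq.symm]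
  · rw [single_mul_apply_of_ne _ _ _ _ _ hp, single_apply_of_row_ne hp.symm]

variable [CommRing R]

theorem IsUpperTriangular.commute_transvection (hw : w.IsUpperTriangular)
    (hwd : ∀ i, w i i = 1) {i j : ι} (hi : IsBot i) (hj : IsTop j) (t : R) :
    Commute w (transvection i j t) := by
  simp only [Commute, SemiconjBy, transvection, mul_add, add_mul, mul_one, one_mul,
    hw.mul_single_of_isBot hwd hi, hw.single_mul_of_isTop hwd hj]

theorem IsUpperTriangular.det_eq_one (hw : w.IsUpperTriangular) (hwd : ∀ i, w i i = 1) :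
    w.det = 1 := by
  simp [det_of_isUpperTriangular hw, hwd]

end Unitriangular

theorem diagonal_mul_single [Semiring R] (d : ι → R) (i j : ι) (t : R) :
    diagonal d * single i j t = single i j (d i * t) := by
  ext p q
  by_cases hp : i = p <;> simp [diagonal_mul, single_apply, hp]

theorem single_mul_diagonal [Semiring R] (d : ι → R) (i j : ι) (t : R) :
    single i j t * diagonal d = single i j (t * d j) := by
  ext p q
  by_cases hq : j = q <;> simp [mul_diagonal, single_apply, hq]

theorem permMatrix_inv_mul_single [Semiring R] (σ : Equiv.Perm ι) (i j : ι) (t : R) :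
    (σ⁻¹).permMatrix R * single i j t = single (σ i) (σ j) t * (σ⁻¹).permMatrix R := by
  rw [PEquiv.toMatrix_toPEquiv_mul, PEquiv.mul_toMatrix_toPEquiv]
  ext p q
  simp [single_apply, Equiv.eq_symm_apply, Equiv.Perm.inv_def, eq_comm]

theorem diagonal_mul_permMatrix_inv_mul_transvection [Field R] {d : ι → R}
    (σ : Equiv.Perm ι) {i j : ι} (hd : d (σ j) ≠ 0) (t : R) :
    diagonal d * (σ⁻¹).permMatrix R * transvection i j t =
      transvection (σ i) (σ j) (d (σ i) / d (σ j) * t) *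
        (diagonal d * (σ⁻¹).permMatrix R) := by
  simp only [transvection, mul_add, add_mul, mul_one, one_mul, mul_assoc,
    permMatrix_inv_mul_single]
  rw [← mul_assoc (diagonal d), diagonal_mul_single, ← mul_assoc (single _ _ _),
    single_mul_diagonal, div_mul_eq_mul_div, div_mul_cancel₀ _ hd]

omit [Fintype ι] in
theorem of_eq_permMatrix_inv [Zero R] [One R] (σ : Equiv.Perm ι) :
    (of fun i j => if i = σ j then (1 : R) else 0) = (σ⁻¹).permMatrix R := by
  ext p q
  simp [PEquiv.toMatrix_apply, Equiv.symm_apply_eq]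

end Matrix

theorem commMat_coe {n : ℕ} (x y : GL (Fin n) ℚ) :
    commMat (x : Matrix (Fin n) (Fin n) ℚ) y = ↑⁅x, y⁆ := by
  simp [commMat, commutatorElement_def, coe_units_inv]

theorem double_commutator_formula {n : ℕ} (hn : 2 ≤ n)
    (v u a : Matrix (Fin n) (Fin n) ℚ)
    (hvt : v.BlockTriangular id) (hvd : ∀ i, v i i = 1)
    (hut : u.BlockTriangular id) (hud : ∀ i, u i i = 1)
    (hat : a.BlockTriangular id) (had : ∀ i, a i i = 1)
    (d : Fin n → ℚ) (hd : ∀ i, d i ≠ 0)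
    (σ : Equiv.Perm (Fin n)) (k : ℤ) :
    commMat
      (commMat
        (v * Matrix.diagonal d *
          (Matrix.of fun i j : Fin n => if i = σ j then (1 : ℚ) else 0) * u)
        (elemMat ⟨0, by omega⟩ ⟨n - 1, by omega⟩ (k : ℚ)))
      (v * a * v⁻¹)
    = v * commMat
        (elemMat (σ ⟨0, by omega⟩) (σ ⟨n - 1, by omega⟩)
          (d (σ ⟨0, by omega⟩) / d (σ ⟨n - 1, by omega⟩) * (k : ℚ))) a * v⁻¹ := by
  set i₀ : Fin n := ⟨0, by omega⟩
  set i₁ : Fin n := ⟨n - 1, by omega⟩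
  have hi₀ : IsBot i₀ := fun p => Nat.zero_le p
  have hi₁ : IsTop i₁ := fun p => Nat.le_sub_one_of_lt p.2
  have h₀₁ : i₀ ≠ i₁ := by simp [i₀, i₁, Fin.ext_iff]; omega
  have hdet : ∀ w : Matrix (Fin n) (Fin n) ℚ, w.IsUpperTriangular → (∀ i, w i i = 1) →
      IsUnit w.det := fun w hw hwd => by simp [IsUpperTriangular.det_eq_one hw hwd]
  let Z := GeneralLinearGroup.mk'' (transvection i₀ i₁ (k : ℚ))
    (by simp [det_transvection_of_ne _ _ h₀₁])
  have hZ : ∀ w hw hwd, Commute (GeneralLinearGroup.mk'' w (hdet w hw hwd)) Z :=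
    fun w hw hwd => .units_of_val (IsUpperTriangular.commute_transvection hw hwd hi₀ hi₁ _)
  let G := GeneralLinearGroup.mk'' (diagonal d * (σ⁻¹).permMatrix ℚ)
    (by simp [hd, Finset.prod_ne_zero_iff])
  have hGZ : G * Z * G⁻¹ =
      GeneralLinearGroup.mk'' (transvection (σ i₀) (σ i₁) (d (σ i₀) / d (σ i₁) * k))
        (by simp [det_transvection_of_ne _ _ (σ.injective.ne h₀₁)]) :=
    mul_inv_eq_of_eq_mul (Units.ext (diagonal_mul_permMatrix_inv_mul_transvection σ (hd _) _))
  have key := congrArg Units.val <|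
    commutatorElement_commutatorElement_conj_of_commute (hZ u hut hud) (hZ v hvt hvd)
      (hZ a hat had) G
  rw [hGZ] at key
  simp only [← commMat_coe, Units.val_mul, coe_units_inv] at key
  rw [of_eq_permMatrix_inv, mul_assoc v]
  -- `elemMat` is `transvection`, and `mk'' w _` has value `w`, by definition
  exact key
end

section
/- Let G be a torsion-free nilpotent group. Then for every g ∈ G and every integer k ≠ 0, the centralizer of g^k in G equals the centralizer of g in G: C_G(g) = C_G(g^k). -/
/-! In a torsion-free group every factor `Z_{i+1} / Z_i` of the upper central series is
torsion-free: if `x ∈ Z_{i+2}` and `x ^ n ∈ Z_{i+1}`, then each `⁅x, y⁆` lies in `Z_{i+1}`, so it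
commutes with `x` modulo `Z_i` and `⁅x, y⁆ ^ n ≡ ⁅x ^ n, y⁆ ≡ 1`; induction on `i` applies.
If now `x ^ n = y ^ n` and `x⁻¹ * y ∈ Z_{j+1}`, then `(x⁻¹ * y) ^ n ∈ Z_j`, hence `x⁻¹ * y ∈ Z_j`;
descending the finite upper central series shows that roots are unique. Finally, if `h` commutes
with `g ^ k`, then `(h * g * h⁻¹) ^ k = g ^ k`, so `h * g * h⁻¹ = g`. -/

open scoped commutatorElement

theorem commutatorElement_pow_left_of_commute {G : Type*} [Group G] {x y : G}
    (h : Commute x ⁅x, y⁆) (n : ℕ) : ⁅x ^ n, y⁆ = ⁅x, y⁆ ^ n := by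
  induction n with
  | zero => simp
  | succ n ih =>
    rw [pow_succ', commutatorElement_mul_left_eq_conj_mul, ih, (h.pow_right n).eq, pow_succ]
    group

namespace Subgroup

variable {G : Type*} [Group G]

theorem mem_upperCentralSeries_succ_iff_mk_mem_center {n : ℕ} {x : G} :
    x ∈ upperCentralSeries G (n + 1) ↔ (x : G ⧸ upperCentralSeries G n) ∈ center _ :=
  SetLike.ext_iff.mp (upperCentralSeriesStep_eq_comap_center (upperCentralSeries G n)) x

theorem mem_upperCentralSeries_of_pow_mem (htf : ∀ g : G, g ≠ 1 → ¬IsOfFinOrder g)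
    {i n : ℕ} (hn : n ≠ 0) {x : G} (hx : x ∈ upperCentralSeries G (i + 1))
    (hxn : x ^ n ∈ upperCentralSeries G i) : x ∈ upperCentralSeries G i := by
  induction i generalizing x with
  | zero =>
    rw [upperCentralSeries_zero, mem_bot] at hxn ⊢
    by_contra hx1
    exact htf x hx1 (isOfFinOrder_iff_pow_eq_one.mpr ⟨n, Nat.pos_of_ne_zero hn, hxn⟩)
  | succ i ih =>
    refine mem_upperCentralSeries_succ_iff.mpr fun y ↦
      ih (mem_upperCentralSeries_succ_iff.mp hx y) ?_
    let π := QuotientGroup.mk' (upperCentralSeries G i)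
    have hcomm : Commute (π x) ⁅π x, π y⁆ := by
      rw [← map_commutatorElement]
      exact mem_center_iff.mp (mem_upperCentralSeries_succ_iff_mk_mem_center.mp
        (mem_upperCentralSeries_succ_iff.mp hx y)) (π x)
    rw [← QuotientGroup.ker_mk' (upperCentralSeries G i), MonoidHom.mem_ker, map_pow,
      map_commutatorElement, ← commutatorElement_pow_left_of_commute hcomm, ← map_pow,
      ← map_commutatorElement, ← MonoidHom.mem_ker, QuotientGroup.ker_mk']
    exact mem_upperCentralSeries_succ_iff.mp hxn y

theorem inv_mul_mem_upperCentralSeries_of_pow_eq_pow (htf : ∀ g : G, g ≠ 1 → ¬IsOfFinOrder g)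
    {j n : ℕ} (hn : n ≠ 0) {x y : G} (h : x ^ n = y ^ n)
    (hxy : x⁻¹ * y ∈ upperCentralSeries G (j + 1)) : x⁻¹ * y ∈ upperCentralSeries G j := by
  refine mem_upperCentralSeries_of_pow_mem htf hn hxy ?_
  let π := QuotientGroup.mk' (upperCentralSeries G j)
  have hcomm : Commute (π x) (π (x⁻¹ * y)) :=
    mem_center_iff.mp (mem_upperCentralSeries_succ_iff_mk_mem_center.mp hxy) (π x)
  have hpow : π x ^ n * π ((x⁻¹ * y) ^ n) = π x ^ n := by
    rw [map_pow, ← hcomm.mul_pow, ← map_mul, mul_inv_cancel_left, ← map_pow, ← h, map_pow]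
  rw [← QuotientGroup.ker_mk' (upperCentralSeries G j), MonoidHom.mem_ker]
  exact mul_eq_left.mp hpow

end Subgroup

-- In a noncommutative group `IsMulTorsionFree` is uniqueness of roots, stronger than no torsion.
theorem Group.IsNilpotent.isMulTorsionFree {G : Type*} [Group G] [Group.IsNilpotent G]
    (htf : ∀ g : G, g ≠ 1 → ¬IsOfFinOrder g) : IsMulTorsionFree G := by
  refine ⟨fun n hn x y h ↦ ?_⟩
  obtain ⟨c, hc⟩ := Group.IsNilpotent.nilpotent G
  have descend : ∀ j, x⁻¹ * y ∈ Subgroup.upperCentralSeries G j → x⁻¹ * y = 1 := by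
    intro j
    induction j with
    | zero => exact Subgroup.mem_bot.mp
    | succ j ih =>
      exact fun hxy ↦ ih (Subgroup.inv_mul_mem_upperCentralSeries_of_pow_eq_pow htf hn h hxy)
  exact inv_mul_eq_one.mp (descend c (hc ▸ Subgroup.mem_top _))

theorem Commute.of_zpow_right {G : Type*} [Group G] [IsMulTorsionFree G] {a b : G} {k : ℤ}
    (hk : k ≠ 0) (h : Commute a (b ^ k)) : Commute a b := by
  have hconj : a * b * a⁻¹ = b := zpow_left_injective hk <| by
    simp only [conj_zpow, h.eq, mul_inv_cancel_right]
  exact mul_inv_eq_iff_eq_mul.mp hconj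

theorem Subgroup.centralizer_zpow_eq {G : Type*} [Group G] [IsMulTorsionFree G] (g : G) {k : ℤ}
    (hk : k ≠ 0) : centralizer {g ^ k} = centralizer {g} := by
  ext a
  simp only [mem_centralizer_singleton_iff]
  exact ⟨Commute.of_zpow_right hk, fun h ↦ Commute.zpow_right h k⟩

theorem centralizer_pow_eq_of_torsionFree_nilpotent {G : Type*} [Group G]
    (htf : ∀ g : G, g ≠ 1 → ¬IsOfFinOrder g) [Group.IsNilpotent G]
    (g : G) (k : ℤ) (hk : k ≠ 0) :
    Subgroup.centralizer {g} = Subgroup.centralizer {g ^ k} := by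
  have := Group.IsNilpotent.isMulTorsionFree htf
  exact (Subgroup.centralizer_zpow_eq g hk).symm
end

section
/- Let K be a field, m ≥ 1, G a subgroup of GL_m(K), and g ∈ G. Then there exists an integer k > 0 such that C_G(g^k) = C_G(g^{kn}) for every integer n ≠ 0. -/
/-! In a Noetherian algebra the centralizers of the powers `a ^ j` (`j > 0`) are submodules, so
one of them, `C(a ^ k)`, is maximal. Since `C(a ^ k) ⊆ C(a ^ (k * j))`, maximality forces
equality. A matrix group embeds into the finite-dimensional algebra of matrices, and a negative
power has the same centralizer as its inverse. -/

open Function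

theorem Set.centralizer_singleton_subset_pow {M : Type*} [Monoid M] (a : M) (n : ℕ) :
    Set.centralizer {a} ⊆ Set.centralizer {a ^ n} := by
  intro x hx
  simp only [Set.mem_centralizer_iff, Set.mem_singleton_iff, forall_eq] at hx ⊢
  exact (Commute.pow_left hx n).eq

theorem Set.centralizer_singleton_eq_preimage {M N F : Type*} [Mul M] [Mul N] [FunLike F M N]
    [MulHomClass F M N] {f : F} (hf : Injective f) (x : M) :
    Set.centralizer {x} = f ⁻¹' Set.centralizer {f x} := by
  ext y
  simp only [Set.mem_preimage, Set.mem_centralizer_iff, Set.mem_singleton_iff, forall_eq,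
    ← map_mul, hf.eq_iff]

theorem exists_centralizer_pow_mul_eq_of_isNoetherian {K A : Type*} [CommSemiring K] [Semiring A]
    [Algebra K A] [IsNoetherian K A] (a : A) :
    ∃ k, 0 < k ∧ ∀ j, 0 < j → Set.centralizer {a ^ (k * j)} = Set.centralizer {a ^ k} := by
  let C : ℕ → Submodule K A := fun j => Subalgebra.toSubmodule (Subalgebra.centralizer K {a ^ j})
  have hC : ∀ j, (C j : Set A) = Set.centralizer {a ^ j} := fun j =>
    Subalgebra.coe_centralizer K _
  obtain ⟨_, ⟨k, hk, rfl⟩, hmax⟩ := set_has_maximal_iff_noetherian.mpr ‹_›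
    (C '' {j | 0 < j}) ⟨C 1, 1, Nat.one_pos, rfl⟩
  refine ⟨k, hk, fun j hj => ?_⟩
  have hle : C k ≤ C (k * j) := by
    rw [← SetLike.coe_subset_coe, hC, hC, pow_mul]
    exact Set.centralizer_singleton_subset_pow _ _
  rw [← hC, ← hC, eq_of_le_of_not_lt hle (hmax _ ⟨k * j, Nat.mul_pos hk hj, rfl⟩)]

theorem Subgroup.centralizer_singleton_inv {G : Type*} [Group G] (g : G) :
    centralizer {g⁻¹} = centralizer {g} := by
  ext x
  simp only [mem_centralizer_singleton_iff]
  exact Commute.inv_right_iff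

theorem Subgroup.centralizer_zpow_mul_eq_of_pow_mul {G : Type*} [Group G] {g : G} {k : ℕ}
    (h : ∀ j : ℕ, 0 < j → centralizer {g ^ (k * j)} = centralizer {g ^ k}) {n : ℤ}
    (hn : n ≠ 0) : centralizer {g ^ ((k : ℤ) * n)} = centralizer {g ^ (k : ℤ)} := by
  obtain ⟨j, rfl | rfl⟩ := Int.eq_nat_or_neg n
  · have hj : 0 < j := by omega
    rw [← Nat.cast_mul, zpow_natCast, zpow_natCast, h j hj]
  · have hj : 0 < j := by omega
    rw [mul_neg, zpow_neg, ← Nat.cast_mul, zpow_natCast, zpow_natCast,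
      centralizer_singleton_inv, h j hj]

theorem exists_power_with_constant_centralizer_general {K : Type*} [Field K] {m : ℕ}
    (G : Subgroup (Matrix.GeneralLinearGroup (Fin m) K)) (g : G) :
    ∃ k : ℕ, 0 < k ∧ ∀ n : ℤ, n ≠ 0 →
      Subgroup.centralizer {g ^ ((k : ℤ) * n)} = Subgroup.centralizer {g ^ (k : ℤ)} := by
  let f : G →* Matrix (Fin m) (Fin m) K := (Units.coeHom _).comp G.subtype
  have hf : Injective f := Units.val_injective.comp Subtype.val_injective
  obtain ⟨k, hk, hpow⟩ := exists_centralizer_pow_mul_eq_of_isNoetherian (K := K) (f g)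
  refine ⟨k, hk, fun n hn => Subgroup.centralizer_zpow_mul_eq_of_pow_mul (fun j hj => ?_) hn⟩
  apply SetLike.coe_injective
  change Set.centralizer _ = Set.centralizer _
  rw [Set.centralizer_singleton_eq_preimage hf, Set.centralizer_singleton_eq_preimage hf,
    map_pow, map_pow, hpow j hj]

theorem exists_power_with_constant_centralizer {K : Type*} [Field K] {m : ℕ} (hm : 1 ≤ m)
    (G : Subgroup (Matrix.GeneralLinearGroup (Fin m) K)) (g : G) :
    ∃ k : ℕ, 0 < k ∧ ∀ n : ℤ, n ≠ 0 →
      Subgroup.centralizer {g ^ ((k : ℤ) * n)} = Subgroup.centralizer {g ^ (k : ℤ)} :=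
  exists_power_with_constant_centralizer_general G g
end
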